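/- arXiv:2303.07148 — 2 statements merged into one kernel-verified Lean document; each statement's English description precedes it below -/
import Mathlib

section
/- Let Θ be a space of input histories over (E, I) with output sets O, and let λ ⊆ Θ be a lowerset (a downward-closed subset). Then: (i) λ is itself a space of input histories, Ext(λ) ⊆ Ext(Θ), and Ext(λ) is a lowerset of Ext(Θ); (ii) tips_λ(h) = tips_Θ(h) for all h ∈ λ; (iii) for all h, h' ∈ λ and ω ∈ E, if h ∼_ω h' holds in λ then h ∼_ω h' holds in Θ; hence (iv) if Θ is tight then so is λ; and consequently (v) for every causal function f ∈ CausFun(Θ,O), the restriction f|_λ belongs to CausFun(λ,O). -/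
namespace Caus

/-- Partial functions over events `E` with value family `V`:
each event is assigned an optional value. -/
abbrev PF (E : Type) (V : E → Type) : Type := ∀ ω : E, Option (V ω)

variable {E : Type} {I O : E → Type}

/-- The total function `k` viewed as a partial function with full domain. -/
def toPF (k : ∀ ω : E, I ω) : PF E I := fun ω => some (k ω)

/-- Domain of a partial function. -/
def dom (h : PF E I) : Set E := {ω | (h ω).isSome}

/-- The order on partial functions: `h' ≤ h` iff `dom h' ⊆ dom h` and they agree on `dom h'`. -/
def le (h' h : PF E I) : Prop := ∀ ω : E, (h' ω).isSome → h' ω = h ω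

/-- Compatibility: agreeing on the intersection of the domains. -/
def Compat (h h' : PF E I) : Prop :=
  ∀ ω : E, (h ω).isSome → (h' ω).isSome → h ω = h' ω

/-- Join of two partial functions (union, when they are compatible). -/
def join (h h' : PF E I) : PF E I := fun ω => (h ω).orElse fun _ => h' ω

/-- `k` is the join (union) of the set `S` of partial functions. -/
def IsJoinOf (k : PF E I) (S : Set (PF E I)) : Prop :=
  ∀ (ω : E) (x : I ω), k ω = some x ↔ ∃ h ∈ S, h ω = some x

/-- `Ext Θ`: joins of nonempty pairwise-compatible subsets of `Θ`. -/
def Ext (Θ : Set (PF E I)) : Set (PF E I) :=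
  {k | ∃ S ⊆ Θ, S.Nonempty ∧ S.Pairwise Compat ∧ IsJoinOf k S}

/-- A space of input histories: every `h ∈ Θ` is ∨-prime in `Ext Θ`. -/
def IsSpace (Θ : Set (PF E I)) : Prop :=
  ∀ h ∈ Θ, ∀ k ∈ Ext Θ, ∀ k' ∈ Ext Θ, Compat k k' →
    le h (join k k') → le h k ∨ le h k'

/-- Tip events of `h` in `Θ`. -/
def tips (Θ : Set (PF E I)) (h : PF E I) : Set E :=
  {ω | ω ∈ dom h ∧ ∀ h' ∈ Θ, le h' h → h' ≠ h → ω ∉ dom h'}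

/-- Extended functions: the output partial function has the same domain as the input. -/
def IsExtFun (Θ : Set (PF E I)) (F : PF E I → PF E O) : Prop :=
  ∀ k ∈ Ext Θ, dom (F k) = dom k

/-- The consistency condition for extended functions. -/
def Consistent (Θ : Set (PF E I)) (F : PF E I → PF E O) : Prop :=
  ∀ k ∈ Ext Θ, ∀ k' ∈ Ext Θ, le k' k → le (F k') (F k)

/-- `h` and `h'` are constrained at `ω`: both have tip `ω` and every consistent
extended function with binary outputs takes the same value at `ω` on them. -/
def Constr (Θ : Set (PF E I)) (ω : E) (h h' : PF E I) : Prop :=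
  h ∈ Θ ∧ h' ∈ Θ ∧ ω ∈ tips Θ h ∧ ω ∈ tips Θ h' ∧
  ∀ F : PF E I → PF E (fun _ => Bool),
    IsExtFun Θ F → Consistent Θ F → F h ω = F h' ω

/-- Causal function conditions: `f h` is an assignment of outputs to the tips of `h`,
with equal outputs on histories constrained at an event. -/
def IsCausFun (Θ : Set (PF E I)) (f : PF E I → PF E O) : Prop :=
  (∀ h ∈ Θ, dom (f h) = tips Θ h) ∧
  ∀ (ω : E) (h h' : PF E I), Constr Θ ω h h' → f h ω = f h' ω

/-- Causal functions for `Θ` with outputs `W` (normalized to `none` outside `Θ`). -/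
def CausFunSet (Θ : Set (PF E I)) (W : E → Type) : Set (PF E I → PF E W) :=
  {f | IsCausFun Θ f ∧ ∀ h ∉ Θ, ∀ ω : E, f h ω = none}

open Classical in
/-- The extended causal function `Ext f` of a causal function `f`. -/
noncomputable def extCF (Θ : Set (PF E I)) (f : PF E I → PF E O) : PF E I → PF E O :=
  fun k ω =>
    if hh : ∃ h, h ∈ Θ ∧ le h k ∧ ω ∈ tips Θ h then f hh.choose ω else none

open Classical in
/-- `Prime F̂`: the causal function underlying a consistent extended function. -/
noncomputable def primeCF (Θ : Set (PF E I)) (F : PF E I → PF E O) : PF E I → PF E O :=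
  fun h ω => if h ∈ Θ ∧ ω ∈ tips Θ h then F h ω else none

open Classical in
/-- Restriction of a causal function to a lowerset (normalized outside it). -/
noncomputable def restrictCF (lam : Set (PF E I)) (f : PF E I → PF E O) :
    PF E I → PF E O :=
  fun h => if h ∈ lam then f h else fun _ => none

/-- The free-choice condition. -/
def FreeChoice (Θ : Set (PF E I)) : Prop := ∀ k : ∀ ω : E, I ω, toPF k ∈ Ext Θ

/-- Tightness. -/
def Tight (Θ : Set (PF E I)) : Prop :=
  ∀ k ∈ Ext Θ, ∀ ω ∈ dom k, ∃! h, h ∈ Θ ∧ le h k ∧ ω ∈ tips Θ h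

/-- Maximal extended input histories. -/
def maxExt (Θ : Set (PF E I)) : Set (PF E I) :=
  {k | k ∈ Ext Θ ∧ ∀ k' ∈ Ext Θ, le k k' → k' = k}

/-- Lowersets (downward-closed subsets) of a space `Θ`. -/
def IsLowersetOf (Θ lam : Set (PF E I)) : Prop :=
  lam ⊆ Θ ∧ ∀ h ∈ lam, ∀ h' ∈ Θ, le h' h → h' ∈ lam


/-
Restricting from `Θ` to a lowerset `lam` can only shrink `Ext`, and tips and constraints of a
history in `lam` only involve histories below it, which stay in `lam`. The one real point is that
a history `h ∈ Θ` below some `k ∈ Ext lam` already lies in `lam`: as `E` is finite, `h` lies below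
the join of finitely many members of `lam`, and ∨-primality of `h` in `Ext Θ` puts it below one
of them.
-/

theorem le.trans {a b c : PF E I} (hab : le a b) (hbc : le b c) : le a c := by
  intro ω ha
  rw [hab ω ha]
  exact hbc ω (hab ω ha ▸ ha)

instance : Std.Refl (Compat : PF E I → PF E I → Prop) := ⟨fun _ _ _ _ => rfl⟩

theorem join_eq_some_iff {h h' : PF E I} {ω : E} {x : I ω} :
    join h h' ω = some x ↔ h ω = some x ∨ h ω = none ∧ h' ω = some x := by
  cases hω : h ω <;> simp [join, hω]

theorem IsJoinOf.le_of_mem {k : PF E I} {S : Set (PF E I)} (hk : IsJoinOf k S)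
    {g : PF E I} (hg : g ∈ S) : le g k := by
  intro ω hs
  obtain ⟨x, hx⟩ := Option.isSome_iff_exists.mp hs
  rw [hx, (hk ω x).mpr ⟨g, hg, hx⟩]

theorem IsJoinOf.compat {k a : PF E I} {S : Set (PF E I)} (hk : IsJoinOf k S)
    (ha : ∀ g ∈ S, Compat a g) : Compat a k := by
  intro ω hsa hsk
  obtain ⟨x, hx⟩ := Option.isSome_iff_exists.mp hsk
  obtain ⟨g, hg, hgx⟩ := (hk ω x).mp hx
  rw [hx, ha g hg ω hsa (by simp [hgx]), hgx]

theorem mem_Ext_of_mem {Θ : Set (PF E I)} {h : PF E I} (hh : h ∈ Θ) : h ∈ Ext Θ :=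
  ⟨{h}, by simpa using hh, Set.singleton_nonempty h, Set.pairwise_singleton _ _,
    fun ω x => by simp⟩

theorem Ext_mono {Θ Θ' : Set (PF E I)} (h : Θ ⊆ Θ') : Ext Θ ⊆ Ext Θ' :=
  fun _ ⟨S, hS, hne, hp, hj⟩ => ⟨S, hS.trans h, hne, hp, hj⟩

theorem IsSpace.of_subset {Θ lam : Set (PF E I)} (hΘ : IsSpace Θ) (hlam : lam ⊆ Θ) :
    IsSpace lam :=
  fun h hh k hk k' hk' => hΘ h (hlam hh) k (Ext_mono hlam hk) k' (Ext_mono hlam hk')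

section FiniteJoin

variable {S : Set (PF E I)} (hSc : S.Pairwise Compat) {g : PF E I} (hg : g ∈ S)

include hSc hg in
theorem isJoinOf_foldr_join {t : List (PF E I)} (ht : ∀ f ∈ t, f ∈ S) :
    IsJoinOf (t.foldr join g) {f | f = g ∨ f ∈ t} := by
  induction t with
  | nil => simp [IsJoinOf]
  | cons a t ih =>
    have ha : a ∈ S := ht a List.mem_cons_self
    intro ω x
    rw [List.foldr_cons, join_eq_some_iff, ih fun f hf => ht f (List.mem_cons_of_mem a hf)]
    constructor
    · rintro (hax | ⟨-, f, hf, hfx⟩)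
      · exact ⟨a, Or.inr List.mem_cons_self, hax⟩
      · exact ⟨f, hf.imp_right (List.mem_cons_of_mem a), hfx⟩
    · rintro ⟨f, hf, hfx⟩
      cases haω : a ω with
      | none =>
        refine Or.inr ⟨rfl, f, ?_, hfx⟩
        rcases hf with rfl | hf
        · exact Or.inl rfl
        rcases List.mem_cons.mp hf with rfl | hft
        · simp [haω] at hfx
        · exact Or.inr hft
      | some y =>
        have hfS : f ∈ S := hf.elim (· ▸ hg) (ht f)
        have hagree := Set.pairwise_iff_of_refl.mp hSc ha hfS ω (by simp [haω]) (by simp [hfx])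
        exact Or.inl (haω ▸ hagree.trans hfx)

include hSc hg in
theorem foldr_join_mem_Ext {Θ : Set (PF E I)} (hSΘ : S ⊆ Θ) {t : List (PF E I)}
    (ht : ∀ f ∈ t, f ∈ S) : t.foldr join g ∈ Ext Θ := by
  refine ⟨_, ?_, ⟨g, Or.inl rfl⟩, hSc.mono ?_, isJoinOf_foldr_join hSc hg ht⟩ <;>
    rintro f (rfl | hf)
  exacts [hSΘ hg, hSΘ (ht f hf), hg, ht f hf]

include hSc hg in
theorem IsSpace.exists_le_of_le_foldr_join {Θ : Set (PF E I)} (hΘ : IsSpace Θ) (hSΘ : S ⊆ Θ)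
    {h : PF E I} (hh : h ∈ Θ) {t : List (PF E I)} (ht : ∀ f ∈ t, f ∈ S)
    (hle : le h (t.foldr join g)) : ∃ f ∈ S, le h f := by
  induction t with
  | nil => exact ⟨g, hg, hle⟩
  | cons a t ih =>
    have ha : a ∈ S := ht a List.mem_cons_self
    have ht' : ∀ f ∈ t, f ∈ S := fun f hf => ht f (List.mem_cons_of_mem a hf)
    have hcompat : Compat a (t.foldr join g) :=
      (isJoinOf_foldr_join hSc hg ht').compat fun f hf =>
        Set.pairwise_iff_of_refl.mp hSc ha (hf.elim (· ▸ hg) (ht' f))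
    rcases hΘ h hh a (mem_Ext_of_mem (hSΘ ha)) _ (foldr_join_mem_Ext hSc hg hSΘ ht')
      hcompat hle with hla | hlt
    exacts [⟨a, ha, hla⟩, ih ht' hlt]

end FiniteJoin

theorem IsSpace.exists_le_of_le_of_isJoinOf [Finite E] {Θ : Set (PF E I)} (hΘ : IsSpace Θ)
    {h k : PF E I} (hh : h ∈ Θ) {S : Set (PF E I)} (hSΘ : S ⊆ Θ) (hne : S.Nonempty)
    (hSc : S.Pairwise Compat) (hk : IsJoinOf k S) (hle : le h k) : ∃ g ∈ S, le h g := by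
  have := Fintype.ofFinite E
  obtain ⟨g, hg⟩ := hne
  have hwitness : ∀ ω, ∃ f ∈ S, (h ω).isSome → f ω = h ω := by
    intro ω
    cases hω : h ω with
    | none => exact ⟨g, hg, by simp⟩
    | some x =>
      obtain ⟨f, hf, hfx⟩ := (hk ω x).mp ((hle ω (by simp [hω])).symm.trans hω)
      exact ⟨f, hf, fun _ => hfx⟩
  choose c hcS hch using hwitness
  set t := (Finset.univ : Finset E).toList.map c
  have ht : ∀ f ∈ t, f ∈ S := by
    simp only [t, List.forall_mem_map]
    exact fun ω _ => hcS ω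
  refine hΘ.exists_le_of_le_foldr_join hSc hg hSΘ hh ht fun ω hs => ?_
  obtain ⟨x, hx⟩ := Option.isSome_iff_exists.mp hs
  rw [hx, (isJoinOf_foldr_join hSc hg ht ω x).mpr ⟨c ω, Or.inr ?_, hch ω hs ▸ hx⟩]
  exact List.mem_map.mpr ⟨ω, by simp, rfl⟩

namespace IsLowersetOf

variable {Θ lam : Set (PF E I)} (hlam : IsLowersetOf Θ lam)
include hlam

theorem mem_of_le_of_mem_Ext [Finite E] (hΘ : IsSpace Θ) {h k : PF E I} (hh : h ∈ Θ)
    (hk : k ∈ Ext lam) (hle : le h k) : h ∈ lam := by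
  obtain ⟨S, hS, hne, hSc, hkS⟩ := hk
  obtain ⟨g, hg, hhg⟩ := hΘ.exists_le_of_le_of_isJoinOf hh (hS.trans hlam.1) hne hSc hkS hle
  exact hlam.2 g (hS hg) h hh hhg

theorem Ext_mem_of_le [Finite E] (hΘ : IsSpace Θ) {k k' : PF E I} (hk : k ∈ Ext lam)
    (hk' : k' ∈ Ext Θ) (hle : le k' k) : k' ∈ Ext lam := by
  obtain ⟨S, hS, hne, hSc, hk'S⟩ := hk'
  exact ⟨S, fun g hg => hlam.mem_of_le_of_mem_Ext hΘ (hS hg) hk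
    ((hk'S.le_of_mem hg).trans hle), hne, hSc, hk'S⟩

theorem tips_eq {h : PF E I} (hh : h ∈ lam) : tips lam h = tips Θ h := by
  ext ω
  refine and_congr_right fun _ => ⟨fun ht h' hh' hle => ht h' (hlam.2 h hh h' hh' hle) hle,
    fun ht h' hh' => ht h' (hlam.1 hh')⟩

theorem constr {ω : E} {h h' : PF E I} (hc : Constr lam ω h h') : Constr Θ ω h h' := by
  obtain ⟨hh, hh', htip, htip', hF⟩ := hc
  have hExt := Ext_mono hlam.1
  refine ⟨hlam.1 hh, hlam.1 hh', hlam.tips_eq hh ▸ htip, hlam.tips_eq hh' ▸ htip', ?_⟩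
  exact fun F hFext hFcons => hF F (fun k hk => hFext k (hExt hk))
    (fun k hk k' hk' => hFcons k (hExt hk) k' (hExt hk'))

theorem tight [Finite E] (hΘ : IsSpace Θ) (hT : Tight Θ) : Tight lam := by
  intro k hk ω hω
  obtain ⟨h, ⟨hhΘ, hle, htip⟩, huniq⟩ := hT k (Ext_mono hlam.1 hk) ω hω
  have hh : h ∈ lam := hlam.mem_of_le_of_mem_Ext hΘ hhΘ hk hle
  refine ⟨h, ⟨hh, hle, (hlam.tips_eq hh).symm ▸ htip⟩, ?_⟩
  rintro h' ⟨hh', hle', htip'⟩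
  exact huniq h' ⟨hlam.1 hh', hle', hlam.tips_eq hh' ▸ htip'⟩

theorem restrictCF_mem {f : PF E I → PF E O} (hf : f ∈ CausFunSet Θ O) :
    restrictCF lam f ∈ CausFunSet lam O := by
  classical
  obtain ⟨⟨hdom, hconstr⟩, -⟩ := hf
  have hrestrict : ∀ h ∈ lam, restrictCF lam f h = f h := fun h hh => if_pos hh
  refine ⟨⟨fun h hh => ?_, fun ω h h' hc => ?_⟩, fun h hh ω => by simp [restrictCF, hh]⟩
  · rw [hrestrict h hh, hdom h (hlam.1 hh), hlam.tips_eq hh]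
  · rw [hrestrict h hc.1, hrestrict h' hc.2.1]
    exact hconstr ω h h' (hlam.constr hc)

end IsLowersetOf

theorem stmt13_general {E : Type} [Fintype E] {I O : E → Type}
    (Θ : Set (PF E I)) (hS : IsSpace Θ)
    (lam : Set (PF E I)) (hlam : IsLowersetOf Θ lam) :
    IsSpace lam ∧
    Ext lam ⊆ Ext Θ ∧
    (∀ k ∈ Ext lam, ∀ k' ∈ Ext Θ, le k' k → k' ∈ Ext lam) ∧
    (∀ h ∈ lam, tips lam h = tips Θ h) ∧
    (∀ ω : E, ∀ h ∈ lam, ∀ h' ∈ lam, Constr lam ω h h' → Constr Θ ω h h') ∧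
    (Tight Θ → Tight lam) ∧
    (∀ f ∈ CausFunSet Θ O, restrictCF lam f ∈ CausFunSet lam O) :=
  ⟨hS.of_subset hlam.1, Ext_mono hlam.1, fun _ hk _ hk' => hlam.Ext_mem_of_le hS hk hk',
    fun _ => hlam.tips_eq, fun _ _ _ _ _ => hlam.constr, hlam.tight hS,
    fun _ => hlam.restrictCF_mem⟩

/-- lowersets of a space of input histories are spaces of input
histories; they inherit extended histories (as a lowerset of `Ext Θ`), tips,
constraints and tightness, and causal functions restrict to causal functions. -/
theorem stmt13 {E : Type} [Fintype E] {I O : E → Type}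
    [∀ ω, Nonempty (I ω)] [∀ ω, Nonempty (O ω)]
    (Θ : Set (PF E I)) (hS : IsSpace Θ)
    (lam : Set (PF E I)) (hlam : IsLowersetOf Θ lam) :
    IsSpace lam ∧
    Ext lam ⊆ Ext Θ ∧
    (∀ k ∈ Ext lam, ∀ k' ∈ Ext Θ, le k' k → k' ∈ Ext lam) ∧
    (∀ h ∈ lam, tips lam h = tips Θ h) ∧
    (∀ ω : E, ∀ h ∈ lam, ∀ h' ∈ lam, Constr lam ω h h' → Constr Θ ω h h') ∧
    (Tight Θ → Tight lam) ∧
    (∀ f ∈ CausFunSet Θ O, restrictCF lam f ∈ CausFunSet lam O) :=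
  stmt13_general Θ hS lam hlam

end Caus
end

section
/- Let Θ be a space of input histories over (E, I), with E finite, and O output sets. Every compatible family (f_{↓k})_{k maximal in Ext(Θ)} of causal functions indexed by the standard cover of Θ — i.e. f_{↓k} ∈ CausFun(↓k, O) for each maximal k ∈ Ext(Θ), with f_{↓k} and f_{↓k'} agreeing on ↓k ∩ ↓k' for all maximal k, k' — admits a gluing f̂ ∈ CausFun(Θ, O) with f̂|_{↓k} = f_{↓k} for every maximal k ∈ Ext(Θ). -/
namespace Caus

variable {E : Type} {I O : E → Type}

/-- The downset `↓k ∩ Θ` of an extended input history `k`. -/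
def dcl (Θ : Set (PF E I)) (k : PF E I) : Set (PF E I) := {h | h ∈ Θ ∧ le h k}

/-!
Glue by evaluating, at each history `h`, the member `ff k` of the family for any maximal
extended history `k ≥ h`; compatibility makes the choice of `k` irrelevant. Two
tip-histories of `ω` below a common extended history `k` lie in the downset of a maximal
extension of `k`, where they are constrained, so the glued function `g` gives them equal
outputs. Hence `extCF Θ g` is a consistent extended function, and this forces equal
outputs on histories constrained at `ω` in `Θ`.
-/

theorem le.refl (h : PF E I) : le h h := fun _ _ => rfl

theorem le.isSome {a b : PF E I} (hab : le a b) {ω : E} (hω : (a ω).isSome) :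
    (b ω).isSome := by
  rwa [← hab ω hω]

theorem le.dom_subset {a b : PF E I} (hab : le a b) : dom a ⊆ dom b := fun _ => hab.isSome

theorem le.eq_of_dom_subset {a b : PF E I} (hab : le a b) (hba : dom b ⊆ dom a) : a = b := by
  funext ω
  by_cases hω : (a ω).isSome
  · exact hab ω hω
  · have hbω : ¬ (b ω).isSome := fun h => hω (hba h)
    rw [Option.not_isSome_iff_eq_none] at hω hbω
    rw [hω, hbω]

theorem exists_minimal_le [Finite E] {S : Set (PF E I)} (hS : S.Nonempty) :
    ∃ a ∈ S, ∀ b ∈ S, le b a → b = a := by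
  obtain ⟨a, haS, hmin⟩ := (InvImage.wf dom wellFounded_lt).has_min S hS
  refine ⟨a, haS, fun b hbS hba => ?_⟩
  by_contra hne
  exact hmin b hbS (hba.dom_subset.ssubset_of_ne fun h => hne (hba.eq_of_dom_subset h.ge))

theorem exists_maximal_le [Finite E] {S : Set (PF E I)} (hS : S.Nonempty) :
    ∃ a ∈ S, ∀ b ∈ S, le a b → b = a := by
  obtain ⟨a, haS, hmax⟩ := (InvImage.wf dom wellFounded_gt).has_min S hS
  refine ⟨a, haS, fun b hbS hab => ?_⟩
  by_contra hne
  exact hmax b hbS (hab.dom_subset.ssubset_of_ne fun h => hne (hab.eq_of_dom_subset h.ge).symm)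

theorem IsJoinOf.le {k : PF E I} {S : Set (PF E I)} (hk : IsJoinOf k S) {s : PF E I}
    (hs : s ∈ S) : le s k := fun ω hω => by
  obtain ⟨x, hx⟩ := Option.isSome_iff_exists.mp hω
  rw [hx, (hk ω x).mpr ⟨s, hs, hx⟩]

theorem mem_Ext_dcl {Θ : Set (PF E I)} {k : PF E I} (hk : k ∈ Ext Θ) : k ∈ Ext (dcl Θ k) := by
  obtain ⟨S, hSΘ, hne, hpw, hJ⟩ := hk
  exact ⟨S, fun s hs => ⟨hSΘ hs, hJ.le hs⟩, hne, hpw, hJ⟩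

theorem tips_dcl {Θ : Set (PF E I)} {k h : PF E I} (hh : h ∈ dcl Θ k) :
    tips (dcl Θ k) h = tips Θ h := by
  ext ω
  refine ⟨fun ⟨hdom, hmin⟩ => ⟨hdom, fun h' hh' hle => hmin h' ⟨hh', hle.trans hh.2⟩ hle⟩,
    fun ⟨hdom, hmin⟩ => ⟨hdom, fun h' hh' => hmin h' hh'.1⟩⟩

theorem exists_mem_tips_le [Finite E] {Θ : Set (PF E I)} {k : PF E I} (hk : k ∈ Ext Θ)
    {ω : E} (hω : ω ∈ dom k) : ∃ h ∈ dcl Θ k, ω ∈ tips Θ h := by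
  obtain ⟨S, hSΘ, -, -, hJ⟩ := hk
  obtain ⟨x, hx⟩ := Option.isSome_iff_exists.mp hω
  obtain ⟨s, hsS, hsx⟩ := (hJ ω x).mp hx
  obtain ⟨h, ⟨⟨hhΘ, hhs⟩, hωh⟩, hmin⟩ :=
    exists_minimal_le (S := {h ∈ dcl Θ s | ω ∈ dom h})
      ⟨s, ⟨hSΘ hsS, le.refl s⟩, by simp [dom, hsx]⟩
  exact ⟨h, ⟨hhΘ, hhs.trans (hJ.le hsS)⟩, hωh, fun h' hh'Θ hle hne hωh' =>
    hne (hmin h' ⟨⟨hh'Θ, hle.trans hhs⟩, hωh'⟩ hle)⟩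

theorem exists_mem_maxExt_le [Finite E] {Θ : Set (PF E I)} {k : PF E I} (hk : k ∈ Ext Θ) :
    ∃ m ∈ maxExt Θ, le k m := by
  obtain ⟨m, ⟨hmE, hkm⟩, hmax⟩ :=
    exists_maximal_le (S := {m ∈ Ext Θ | le k m}) ⟨k, hk, le.refl k⟩
  exact ⟨m, ⟨hmE, fun k' hk' hmk' => hmax k' ⟨hk', hkm.trans hmk'⟩ hmk'⟩, hkm⟩

theorem IsExtFun.map {W : E → Type} {Θ : Set (PF E I)} {F : PF E I → PF E O}
    (hF : IsExtFun Θ F) (φ : ∀ ω, O ω → W ω) :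
    IsExtFun Θ (fun k ω => (F k ω).map (φ ω)) := fun k hk => by
  simpa only [dom, Option.isSome_map] using hF k hk

theorem Consistent.map {W : E → Type} {Θ : Set (PF E I)} {F : PF E I → PF E O}
    (hF : Consistent Θ F) (φ : ∀ ω, O ω → W ω) :
    Consistent Θ (fun k ω => (F k ω).map (φ ω)) := fun k hk k' hk' hle ω hω => by
  rw [Option.isSome_map] at hω
  simp only [hF k hk k' hk' hle ω hω]

open Classical in
/-- `Constr` only tests Boolean extended functions, but it binds those with any outputs:
compose with the indicator of the value at `h'`. -/
theorem Constr.eq_of_consistent {Θ : Set (PF E I)} {ω : E} {h h' : PF E I}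
    (hc : Constr Θ ω h h') {F : PF E I → PF E O} (hFe : IsExtFun Θ F)
    (hFc : Consistent Θ F) : F h ω = F h' ω := by
  obtain ⟨-, hh', -, hω', hall⟩ := hc
  have hbool := hall _ (hFe.map fun ω o => decide (some o = F h' ω))
    (hFc.map fun ω o => decide (some o = F h' ω))
  obtain ⟨y, hy⟩ : ∃ y, F h' ω = some y := Option.isSome_iff_exists.mp <| by
    have : ω ∈ dom (F h') := by rw [hFe h' (mem_Ext_of_mem hh')]; exact hω'.1
    exact this
  rw [hy, Option.map_some, decide_eq_true rfl] at hbool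
  obtain ⟨x, hx, hxy⟩ := Option.map_eq_some_iff.mp hbool
  rw [hx, hy, of_decide_eq_true hxy]

def IsTipCoherent (Θ : Set (PF E I)) (g : PF E I → PF E O) : Prop :=
  ∀ k ∈ Ext Θ, ∀ h₁ ∈ dcl Θ k, ∀ h₂ ∈ dcl Θ k, ∀ ω ∈ tips Θ h₁, ω ∈ tips Θ h₂ →
    g h₁ ω = g h₂ ω

theorem extCF_eq_of_mem_tips {Θ : Set (PF E I)} {g : PF E I → PF E O}
    (hg : IsTipCoherent Θ g) {k h : PF E I} (hk : k ∈ Ext Θ) (hh : h ∈ dcl Θ k) {ω : E}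
    (hω : ω ∈ tips Θ h) : extCF Θ g k ω = g h ω := by
  have hex : ∃ h, h ∈ Θ ∧ le h k ∧ ω ∈ tips Θ h := ⟨h, hh.1, hh.2, hω⟩
  obtain ⟨hcΘ, hck, hcω⟩ := hex.choose_spec
  rw [extCF, dif_pos hex]
  exact hg k hk _ ⟨hcΘ, hck⟩ h hh ω hcω hω

theorem isExtFun_extCF [Finite E] {Θ : Set (PF E I)} {g : PF E I → PF E O}
    (hdom : ∀ h ∈ Θ, dom (g h) = tips Θ h) : IsExtFun Θ (extCF Θ g) := by
  intro k hk
  ext ω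
  simp only [dom, extCF, Set.mem_ofPred_eq]
  split_ifs with hex
  · obtain ⟨hcΘ, hck, hcω⟩ := hex.choose_spec
    have hgω : ω ∈ dom (g hex.choose) := by rw [hdom _ hcΘ]; exact hcω
    exact iff_of_true hgω (hck.isSome hcω.1)
  · refine iff_of_false (by simp) fun hω => hex ?_
    obtain ⟨h, hh, hω⟩ := exists_mem_tips_le hk hω
    exact ⟨h, hh.1, hh.2, hω⟩

theorem consistent_extCF {Θ : Set (PF E I)} {g : PF E I → PF E O} (hg : IsTipCoherent Θ g) :
    Consistent Θ (extCF Θ g) := by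
  intro k hk k' hk' hle ω hω
  have hex : ∃ h, h ∈ Θ ∧ le h k' ∧ ω ∈ tips Θ h := by
    by_contra hex
    simp [extCF, dif_neg hex] at hω
  obtain ⟨h, hhΘ, hhk', hhω⟩ := hex
  rw [extCF_eq_of_mem_tips hg hk' ⟨hhΘ, hhk'⟩ hhω,
    extCF_eq_of_mem_tips hg hk ⟨hhΘ, hhk'.trans hle⟩ hhω]

theorem IsTipCoherent.isCausFun [Finite E] {Θ : Set (PF E I)} {g : PF E I → PF E O}
    (hdom : ∀ h ∈ Θ, dom (g h) = tips Θ h) (hg : IsTipCoherent Θ g) : IsCausFun Θ g := by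
  refine ⟨hdom, fun ω h h' hc => ?_⟩
  have hext := hc.eq_of_consistent (isExtFun_extCF hdom) (consistent_extCF hg)
  rwa [extCF_eq_of_mem_tips hg (mem_Ext_of_mem hc.1) ⟨hc.1, le.refl h⟩ hc.2.2.1,
    extCF_eq_of_mem_tips hg (mem_Ext_of_mem hc.2.1) ⟨hc.2.1, le.refl h'⟩ hc.2.2.2.1] at hext

theorem constr_dcl {Θ : Set (PF E I)} {k h₁ h₂ : PF E I} {ω : E} (hk : k ∈ Ext Θ)
    (hh₁ : h₁ ∈ dcl Θ k) (hh₂ : h₂ ∈ dcl Θ k) (hω₁ : ω ∈ tips Θ h₁) (hω₂ : ω ∈ tips Θ h₂) :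
    Constr (dcl Θ k) ω h₁ h₂ := by
  refine ⟨hh₁, hh₂, (tips_dcl hh₁).symm ▸ hω₁, (tips_dcl hh₂).symm ▸ hω₂, fun F hFe hFc => ?_⟩
  have hk' := mem_Ext_dcl hk
  have hFk : ∀ h ∈ dcl Θ k, ω ∈ tips Θ h → F h ω = F k ω := fun h hh hω => by
    have hωF : ω ∈ dom (F h) := by rw [hFe h (mem_Ext_of_mem hh)]; exact hω.1
    exact hFc k hk' h (mem_Ext_of_mem hh) hh.2 ω hωF
  rw [hFk h₁ hh₁ hω₁, hFk h₂ hh₂ hω₂]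

theorem isCausFun_of_isCausFun_dcl [Finite E] {Θ : Set (PF E I)} {g : PF E I → PF E O}
    (hg : ∀ k ∈ maxExt Θ, IsCausFun (dcl Θ k) g) : IsCausFun Θ g := by
  refine IsTipCoherent.isCausFun (fun h hh => ?_) fun k hk h₁ hh₁ h₂ hh₂ ω hω₁ hω₂ => ?_
  · obtain ⟨m, hm, hhm⟩ := exists_mem_maxExt_le (mem_Ext_of_mem hh)
    have hhm' : h ∈ dcl Θ m := ⟨hh, hhm⟩
    rw [(hg m hm).1 h hhm', tips_dcl hhm']
  · obtain ⟨m, hm, hkm⟩ := exists_mem_maxExt_le hk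
    exact (hg m hm).2 ω h₁ h₂
      (constr_dcl hm.1 ⟨hh₁.1, hh₁.2.trans hkm⟩ ⟨hh₂.1, hh₂.2.trans hkm⟩ hω₁ hω₂)

theorem IsCausFun.congr {Θ : Set (PF E I)} {f g : PF E I → PF E O} (hf : IsCausFun Θ f)
    (hfg : ∀ h ∈ Θ, g h = f h) : IsCausFun Θ g := by
  refine ⟨fun h hh => hfg h hh ▸ hf.1 h hh, fun ω h h' hc => ?_⟩
  rw [hfg h hc.1, hfg h' hc.2.1]
  exact hf.2 ω h h' hc

theorem exists_gluing {Θ : Set (PF E I)} {ff : PF E I → PF E I → PF E O}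
    (hcompat : ∀ k ∈ maxExt Θ, ∀ k' ∈ maxExt Θ, ∀ h ∈ dcl Θ k ∩ dcl Θ k', ff k h = ff k' h) :
    ∃ g : PF E I → PF E O, (∀ h ∉ Θ, ∀ ω, g h ω = none) ∧
      ∀ k ∈ maxExt Θ, ∀ h ∈ dcl Θ k, g h = ff k h := by
  classical
  let g : PF E I → PF E O := fun h =>
    if hh : ∃ m ∈ maxExt Θ, h ∈ dcl Θ m then ff hh.choose h else fun _ => none
  refine ⟨g, fun h hh ω => ?_, fun k hk h hhk => ?_⟩
  · have hex : ¬ ∃ m ∈ maxExt Θ, h ∈ dcl Θ m := fun ⟨_, _, hhm⟩ => hh hhm.1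
    simp only [g, dif_neg hex]
  · have hex : ∃ m ∈ maxExt Θ, h ∈ dcl Θ m := ⟨k, hk, hhk⟩
    simp only [g, dif_pos hex]
    exact hcompat _ hex.choose_spec.1 k hk h ⟨hex.choose_spec.2, hhk⟩

theorem stmt18_general {E : Type} [Fintype E] {I O : E → Type}
    (Θ : Set (PF E I))
    (ff : PF E I → (PF E I → PF E O))
    (hff : ∀ k ∈ maxExt Θ, ff k ∈ CausFunSet (dcl Θ k) O)
    (hcompat : ∀ k ∈ maxExt Θ, ∀ k' ∈ maxExt Θ,
      ∀ h ∈ dcl Θ k ∩ dcl Θ k', ff k h = ff k' h) :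
    ∃ g ∈ CausFunSet Θ O, ∀ k ∈ maxExt Θ, ∀ h ∈ dcl Θ k, g h = ff k h := by
  obtain ⟨g, hg_out, hg_glue⟩ := exists_gluing hcompat
  exact ⟨g, ⟨isCausFun_of_isCausFun_dcl fun k hk => (hff k hk).1.congr (hg_glue k hk),
    hg_out⟩, hg_glue⟩

/-- every compatible family of causal functions indexed by the
standard cover of `Θ` (the downsets of maximal extended input histories) admits a
gluing to a causal function on the whole of `Θ`. -/
theorem stmt18 {E : Type} [Fintype E] {I O : E → Type}
    [∀ ω, Nonempty (I ω)] [∀ ω, Nonempty (O ω)]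
    (Θ : Set (PF E I)) (hS : IsSpace Θ)
    (ff : PF E I → (PF E I → PF E O))
    (hff : ∀ k ∈ maxExt Θ, ff k ∈ CausFunSet (dcl Θ k) O)
    (hcompat : ∀ k ∈ maxExt Θ, ∀ k' ∈ maxExt Θ,
      ∀ h ∈ dcl Θ k ∩ dcl Θ k', ff k h = ff k' h) :
    ∃ g ∈ CausFunSet Θ O, ∀ k ∈ maxExt Θ, ∀ h ∈ dcl Θ k, g h = ff k h :=
  stmt18_general Θ ff hff hcompat

end Caus
end
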